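/- arXiv:2404.17696 — 4 statements merged into one kernel-verified Lean document; each statement's English description precedes it below -/
import Mathlib

section
/- Let S ⊆ ℝⁿ be a closed set, x̄ ∈ S, and d ∈ T_S(x̄). Then T²_S(x̄; d) + T̂_S(x̄; d) = T²_S(x̄; d), where T̂_S(x̄; d) is the directional regular (Clarke) tangent cone. -/
open Filter Topology Set
open scoped RealInnerProductSpace Pointwise

noncomputable section

variable {E : Type*} [NormedAddCommGroup E] [InnerProductSpace ℝ E]

/-- Bouligand (contingent) tangent cone. -/
def tangentConeB (S : Set E) (x : E) : Set E :=
  {d | ∃ (t : ℕ → ℝ) (dk : ℕ → E), (∀ k, 0 < t k) ∧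
    Tendsto t atTop (nhds 0) ∧ Tendsto dk atTop (nhds d) ∧
    ∀ k, x + t k • dk k ∈ S}

/-- Outer second-order tangent set. -/
def secondTangent (S : Set E) (x d : E) : Set E :=
  {w | ∃ (t : ℕ → ℝ) (wk : ℕ → E), (∀ k, 0 < t k) ∧
    Tendsto t atTop (nhds 0) ∧ Tendsto wk atTop (nhds w) ∧
    ∀ k, x + t k • d + ((1/2 : ℝ) * t k ^ 2) • wk k ∈ S}

/-- Asymptotic second-order tangent cone. -/
def asympTangent (S : Set E) (x d : E) : Set E :=
  {w | ∃ (t r : ℕ → ℝ) (wk : ℕ → E), (∀ k, 0 < t k) ∧ (∀ k, 0 < r k) ∧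
    Tendsto t atTop (nhds 0) ∧ Tendsto r atTop (nhds 0) ∧
    Tendsto (fun k => t k / r k) atTop (nhds 0) ∧
    Tendsto wk atTop (nhds w) ∧
    ∀ k, x + t k • d + ((1/2 : ℝ) * t k * r k) • wk k ∈ S}

/-- Fréchet (regular) normal cone (empty, by convention, outside of `S`). -/
def frechetNormal (S : Set E) (x : E) : Set E :=
  {v | x ∈ S ∧ ∀ ε > (0:ℝ), ∃ δ > (0:ℝ), ∀ y ∈ S, ‖y - x‖ < δ →
    ⟪v, y - x⟫ ≤ ε * ‖y - x‖}

/-- Limiting (Mordukhovich) normal cone. -/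
def limitingNormal (S : Set E) (x : E) : Set E :=
  {v | ∃ (xk vk : ℕ → E), Tendsto xk atTop (nhds x) ∧
    Tendsto vk atTop (nhds v) ∧ ∀ k, vk k ∈ frechetNormal S (xk k)}

/-- Directional limiting normal cone. -/
def dirLimitingNormal (S : Set E) (x d : E) : Set E :=
  {v | ∃ (t : ℕ → ℝ) (dk vk : ℕ → E), (∀ k, 0 < t k) ∧
    Tendsto t atTop (nhds 0) ∧ Tendsto dk atTop (nhds d) ∧
    Tendsto vk atTop (nhds v) ∧ ∀ k, vk k ∈ frechetNormal S (x + t k • dk k)}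

/-- Directional regular (Clarke) tangent cone. -/
def dirClarkeTangent (S : Set E) (x d : E) : Set E :=
  {v | ∀ (t : ℕ → ℝ) (dk : ℕ → E), (∀ k, 0 < t k) →
    Tendsto t atTop (nhds 0) → Tendsto dk atTop (nhds d) →
    (∀ k, x + t k • dk k ∈ S) →
    ∃ vk : ℕ → E, Tendsto vk atTop (nhds v) ∧
      ∀ k, vk k ∈ tangentConeB S (x + t k • dk k)}

/-- Directional neighborhood `V_{ρ,δ}(d)`. -/
def dirNbhd (d : E) (ρ δ : ℝ) : Set E :=
  {w | ‖w‖ ≤ δ ∧ ‖‖d‖ • w - ‖w‖ • d‖ ≤ ρ * ‖w‖ * ‖d‖}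

/-- Support function, with values in `EReal` (so that `σ_∅ = -∞`). -/
def suppFn (A : Set E) (l : E) : EReal :=
  ⨆ u ∈ A, ((⟪l, u⟫ : ℝ) : EReal)

/-!
If `t_k ↓ 0` and `w_k → w` realize `w ∈ T²_S(x; d)`, then `z_k = x + t_k d + ½ t_k² w_k ∈ S`, and every
point of `S` near `z_k` is of the form `x + t_k d'` with `d'` close to `d`. A contradiction argument
with sequences shows that the definition of the directional regular tangent cone is uniform there:
from each such point one can make arbitrarily short steps into `S` in directions `ε`-close to `v`.
Chaining these steps (a continuous induction on the time `a ∈ [0, ½ t_k²]`) gives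
`dist (z_k + a v, S) ≤ ε a`, so `dist (z_k + ½ t_k² v, S) = o(t_k²)`; projecting these points onto the
closed set `S` shows `w + v ∈ T²_S(x; d)`. The reverse inclusion holds because `0 ∈ T̂_S(x; d)`.
-/

open Metric

theorem zero_mem_dirClarkeTangent (S : Set E) (x d : E) : (0 : E) ∈ dirClarkeTangent S x d := by
  intro t dk _ _ _ hmem
  refine ⟨fun _ => 0, tendsto_const_nhds, fun k => ?_⟩
  exact ⟨fun j => 1 / (j + 1 : ℝ), fun _ => 0, fun j => by positivity,
    tendsto_one_div_add_atTop_nhds_zero_nat, tendsto_const_nhds, fun _ => by simpa using hmem k⟩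

theorem exists_smul_mem_of_mem_tangentConeB {S : Set E} {y u : E} (hu : u ∈ tangentConeB S y)
    {σ ε : ℝ} (hσ : 0 < σ) (hε : 0 < ε) : ∃ s ∈ Ioc 0 σ, ∃ u' ∈ ball u ε, y + s • u' ∈ S := by
  obtain ⟨t, uk, ht, ht0, huk, hmem⟩ := hu
  obtain ⟨k, hkσ, hkε⟩ :=
    ((ht0.eventually_lt_const hσ).and (tendsto_nhds.mp huk ε hε)).exists
  exact ⟨t k, ⟨ht k, hkσ.le⟩, uk k, hkε, hmem k⟩

theorem exists_uniform_step_of_mem_dirClarkeTangent {S : Set E} {x d v : E}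
    (hv : v ∈ dirClarkeTangent S x d) {ε : ℝ} (hε : 0 < ε) :
    ∃ δ > 0, ∀ τ ∈ Ioc 0 δ, ∀ y ∈ S, ‖y - (x + τ • d)‖ ≤ δ * τ →
      ∀ σ > (0 : ℝ), ∃ s ∈ Ioc 0 σ, ∃ u ∈ closedBall v ε, y + s • u ∈ S := by
  by_contra! h
  choose τ hτ y hyS hy σ hσ hbad using fun k : ℕ => h (1 / (k + 1 : ℝ)) (by positivity)
  set dk : ℕ → E := fun k => d + (τ k)⁻¹ • (y k - (x + τ k • d))
  have hxdk : ∀ k, x + τ k • dk k = y k := fun k => by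
    simp only [dk, smul_add, smul_inv_smul₀ (hτ k).1.ne']
    abel
  have hτ0 : Tendsto τ atTop (𝓝 0) :=
    squeeze_zero (fun k => (hτ k).1.le) (fun k => (hτ k).2) tendsto_one_div_add_atTop_nhds_zero_nat
  have hdk : Tendsto dk atTop (𝓝 d) := by
    rw [tendsto_iff_norm_sub_tendsto_zero]
    refine squeeze_zero (fun _ => norm_nonneg _) (fun k => ?_) tendsto_one_div_add_atTop_nhds_zero_nat
    have hτk := (hτ k).1
    rw [add_sub_cancel_left, norm_smul_of_nonneg (inv_nonneg.2 hτk.le), inv_mul_le_iff₀ hτk,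
      mul_comm]
    exact hy k
  obtain ⟨vk, hvk, hvkT⟩ := hv τ dk (fun k => (hτ k).1) hτ0 hdk fun k => hxdk k ▸ hyS k
  obtain ⟨k, hk⟩ := (tendsto_nhds.mp hvk (ε / 2) (half_pos hε)).exists
  obtain ⟨s, hs, u, hu, hmem⟩ := exists_smul_mem_of_mem_tangentConeB (hvkT k) (hσ k) (half_pos hε)
  refine hbad k s hs u ?_ (hxdk k ▸ hmem)
  have huvk := mem_ball.1 hu
  exact mem_closedBall.2 ((dist_triangle u (vk k) v).trans (by linarith))

theorem infDist_add_smul_le_of_forall_step [ProperSpace E] {S : Set E} (hS : IsClosed S)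
    {z v : E} {ε L : ℝ} (hz : z ∈ S) (hε : 0 ≤ ε) (hL : 0 ≤ L)
    (hstep : ∀ y ∈ S, ‖y - z‖ ≤ L * (‖v‖ + ε) →
      ∀ σ > (0 : ℝ), ∃ s ∈ Ioc 0 σ, ∃ u ∈ closedBall v ε, y + s • u ∈ S) :
    infDist (z + L • v) S ≤ ε * L := by
  have hcont : Continuous fun a : ℝ => infDist (z + a • v) S :=
    (continuous_infDist_pt S).comp (by fun_prop)
  refine IsClosed.mem_of_ge_of_forall_exists_gt (s := {a | infDist (z + a • v) S ≤ ε * a})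
    ((isClosed_le hcont (by fun_prop)).inter isClosed_Icc) (by simp [infDist_zero_of_mem hz]) hL ?_
  rintro a ⟨ha, ha0, haL⟩
  obtain ⟨y, hyS, hy⟩ := hS.exists_infDist_eq_dist ⟨z, hz⟩ (z + a • v)
  have hya : ‖z + a • v - y‖ ≤ ε * a := by rw [← dist_eq_norm, ← hy]; exact ha
  have hyz : ‖y - z‖ ≤ L * (‖v‖ + ε) := calc
    ‖y - z‖ = ‖a • v - (z + a • v - y)‖ := by congr 1; abel
    _ ≤ ‖a • v‖ + ‖z + a • v - y‖ := norm_sub_le _ _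
    _ ≤ a * ‖v‖ + ε * a := by rw [norm_smul_of_nonneg ha0]; exact add_le_add le_rfl hya
    _ ≤ L * (‖v‖ + ε) := by nlinarith [norm_nonneg v]
  obtain ⟨s, ⟨hs0, hsσ⟩, u, hu, hmem⟩ := hstep y hyS hyz (L - a) (sub_pos.2 haL)
  refine ⟨a + s, ?_, by linarith, by linarith⟩
  calc infDist (z + (a + s) • v) S ≤ dist (z + (a + s) • v) (y + s • u) :=
        infDist_le_dist_of_mem hmem
    _ = ‖(z + a • v - y) + s • (v - u)‖ := by rw [dist_eq_norm]; congr 1; module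
    _ ≤ ε * a + s * ε := by
      refine (norm_add_le _ _).trans (add_le_add hya ?_)
      rw [norm_smul_of_nonneg hs0.le, ← dist_eq_norm']
      exact mul_le_mul_of_nonneg_left (mem_closedBall.1 hu) hs0.le
    _ = ε * (a + s) := by ring

theorem mem_secondTangent_of_forall_infDist_le [ProperSpace E] {S : Set E} (hS : IsClosed S)
    (hne : S.Nonempty) {x d w : E} {t : ℕ → ℝ} {wk : ℕ → E} (ht : ∀ k, 0 < t k)
    (ht0 : Tendsto t atTop (𝓝 0)) (hwk : Tendsto wk atTop (𝓝 w))
    (hdist : ∀ ε > 0, ∀ᶠ k in atTop,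
      infDist (x + t k • d + ((1/2 : ℝ) * t k ^ 2) • wk k) S ≤ ε * ((1/2 : ℝ) * t k ^ 2)) :
    w ∈ secondTangent S x d := by
  set L : ℕ → ℝ := fun k => (1/2 : ℝ) * t k ^ 2
  have hL : ∀ k, 0 < L k := fun k => by have := ht k; positivity
  set p : ℕ → E := fun k => x + t k • d + L k • wk k
  choose y hyS hy using fun k => hS.exists_infDist_eq_dist hne (p k)
  refine ⟨t, fun k => wk k + (L k)⁻¹ • (y k - p k), ht, ht0, ?_, fun k => ?_⟩
  · have hcorr : Tendsto (fun k => (L k)⁻¹ • (y k - p k)) atTop (𝓝 0) := by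
      rw [NormedAddGroup.tendsto_nhds_zero]
      intro ε hε
      filter_upwards [hdist (ε / 2) (half_pos hε)] with k (hk : infDist (p k) S ≤ ε / 2 * L k)
      rw [norm_smul_of_nonneg (inv_nonneg.2 (hL k).le), ← dist_eq_norm', ← hy,
        inv_mul_lt_iff₀ (hL k)]
      nlinarith [hL k]
    simpa using hwk.add hcorr
  · have hyk : x + t k • d + L k • (wk k + (L k)⁻¹ • (y k - p k)) = y k := by
      rw [smul_add, smul_inv_smul₀ (hL k).ne']
      simp only [p]
      abel
    exact hyk ▸ hyS k

theorem add_mem_secondTangent [ProperSpace E] {S : Set E} (hS : IsClosed S) {x d w v : E}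
    (hw : w ∈ secondTangent S x d) (hv : v ∈ dirClarkeTangent S x d) :
    w + v ∈ secondTangent S x d := by
  obtain ⟨t, wk, ht, ht0, hwk, hmem⟩ := hw
  refine mem_secondTangent_of_forall_infDist_le hS ⟨_, hmem 0⟩ ht ht0 (hwk.add_const v)
    fun ε hε => ?_
  obtain ⟨δ, hδ, hstep⟩ := exists_uniform_step_of_mem_dirClarkeTangent hv hε
  have hsmall : Tendsto (fun k => t k * (‖wk k‖ + ‖v‖ + ε)) atTop (𝓝 0) := by
    simpa using ht0.mul ((hwk.norm.add_const _).add_const _)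
  filter_upwards [ht0.eventually_le_const hδ, hsmall.eventually_le_const (by positivity : 0 < 2 * δ)]
    with k hkδ hksmall
  set L := (1/2 : ℝ) * t k ^ 2
  rw [smul_add, ← add_assoc]
  refine infDist_add_smul_le_of_forall_step hS (hmem k) hε.le (by positivity)
    fun y hy hyz => hstep (t k) ⟨ht k, hkδ⟩ y hy ?_
  calc ‖y - (x + t k • d)‖ = ‖(y - (x + t k • d + L • wk k)) + L • wk k‖ := by congr 1; abel
    _ ≤ L * (‖v‖ + ε) + L * ‖wk k‖ := by
      refine (norm_add_le _ _).trans (add_le_add hyz ?_)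
      rw [norm_smul_of_nonneg (by positivity)]
    _ = t k / 2 * (t k * (‖wk k‖ + ‖v‖ + ε)) := by ring
    _ ≤ δ * t k := by nlinarith [ht k]

theorem stmt4_general {n : ℕ} (S : Set (EuclideanSpace ℝ (Fin n))) (hS : IsClosed S)
    (x : EuclideanSpace ℝ (Fin n)) (d : EuclideanSpace ℝ (Fin n)) :
    secondTangent S x d + dirClarkeTangent S x d = secondTangent S x d := by
  refine Subset.antisymm ?_ fun w hw => ⟨w, hw, 0, zero_mem_dirClarkeTangent S x d, add_zero w⟩
  rintro _ ⟨w, hw, v, hv, rfl⟩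
  exact add_mem_secondTangent hS hw hv

theorem stmt4 {n : ℕ} (S : Set (EuclideanSpace ℝ (Fin n))) (hS : IsClosed S)
    (x : EuclideanSpace ℝ (Fin n)) (hx : x ∈ S) (d : EuclideanSpace ℝ (Fin n))
    (hd : d ∈ tangentConeB S x) :
    secondTangent S x d + dirClarkeTangent S x d = secondTangent S x d :=
  stmt4_general S hS x d
end
end

section
/- Let S ⊆ ℝⁿ be a closed set, x̄ ∈ S, and d ∈ T_S(x̄). Then for every w ∈ T²_S(x̄; d), the limiting normal cone to T²_S(x̄; d) at w is contained in the directional limiting normal cone N_S(x̄; d); that is, N_{T²_S(x̄;d)}(w) ⊆ N_S(x̄; d). -/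
open Filter Topology Set
open scoped RealInnerProductSpace

noncomputable section

variable {E : Type*} [NormedAddCommGroup E] [InnerProductSpace ℝ E]

/-! Limiting normals are limits of Fréchet normals and `N_S(x; d)` is closed, so it suffices to
treat a Fréchet normal `v` to `T²_S(x; d)` at `w`. Write `w = lim w_k` with
`x + t_k d + ½ t_k² w_k ∈ S`, shift `w_k` by `ρ v` and project the shifted points onto `S`. In the
rescaled coordinates the projections converge (along a subsequence) to some `u ∈ T²_S(x; d)` with
`‖w + ρ v - u‖ ≤ ρ ‖v‖`, while the rescaled proximal normals converge to `w + ρ v - u`, which is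
therefore in `N_S(x; d)`. The Fréchet inequality for `v` at `w` forces `‖u - w‖ ≤ 2 ρ ε`, so
`ρ⁻¹ (w + ρ v - u) ∈ N_S(x; d)` lies within `2 ε` of `v`. -/

section

variable {S : Set E} {x d : E}

theorem smul_mem_frechetNormal {p v : E} (hv : v ∈ frechetNormal S p) {c : ℝ} (hc : 0 ≤ c) :
    c • v ∈ frechetNormal S p := by
  refine ⟨hv.1, fun ε hε => ?_⟩
  obtain ⟨δ, hδ, hv⟩ := hv.2 (ε / (c + 1)) (by positivity)
  refine ⟨δ, hδ, fun y hy hyδ => ?_⟩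
  have hcε : c * (ε / (c + 1)) ≤ ε := by
    rw [mul_div_assoc', div_le_iff₀ (by positivity)]
    nlinarith
  calc ⟪c • v, y - p⟫ = c * ⟪v, y - p⟫ := real_inner_smul_left _ _ _
    _ ≤ c * (ε / (c + 1) * ‖y - p‖) := mul_le_mul_of_nonneg_left (hv y hy hyδ) hc
    _ ≤ ε * ‖y - p‖ := by rw [← mul_assoc]; exact mul_le_mul_of_nonneg_right hcε (norm_nonneg _)

theorem sub_mem_frechetNormal_of_forall_dist_le {z p : E} (hp : p ∈ S)
    (hz : ∀ s ∈ S, dist z p ≤ dist z s) : z - p ∈ frechetNormal S p := by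
  refine ⟨hp, fun ε hε => ⟨2 * ε, by positivity, fun s hs hsδ => ?_⟩⟩
  have hquad : ⟪z - p, s - p⟫ ≤ ‖s - p‖ ^ 2 / 2 := by
    have hzs : ‖z - s‖ ^ 2 = ‖z - p‖ ^ 2 - 2 * ⟪z - p, s - p⟫ + ‖s - p‖ ^ 2 := by
      rw [← norm_sub_sq_real, sub_sub_sub_cancel_right]
    have := pow_le_pow_left₀ dist_nonneg (hz s hs) 2
    rw [dist_eq_norm, dist_eq_norm] at this
    linarith
  nlinarith [norm_nonneg (s - p)]

theorem smul_mem_dirLimitingNormal {v : E} (hv : v ∈ dirLimitingNormal S x d) {c : ℝ}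
    (hc : 0 ≤ c) : c • v ∈ dirLimitingNormal S x d := by
  obtain ⟨t, dk, vk, ht0, ht, hdk, hvk, hvkN⟩ := hv
  exact ⟨t, dk, fun k => c • vk k, ht0, ht, hdk, hvk.const_smul c,
    fun k => smul_mem_frechetNormal (hvkN k) hc⟩

theorem mem_dirLimitingNormal_iff {v : E} :
    v ∈ dirLimitingNormal S x d ↔ ∀ ε > 0, ∃ (t : ℝ) (d' v' : E), 0 < t ∧ t < ε ∧
      dist d' d < ε ∧ dist v' v < ε ∧ v' ∈ frechetNormal S (x + t • d') := by
  constructor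
  · rintro ⟨t, dk, vk, ht0, ht, hdk, hvk, hvkN⟩ ε hε
    obtain ⟨k, htk, hdk, hvk⟩ := ((ht.eventually_lt_const hε).and
      ((Metric.tendsto_nhds.1 hdk ε hε).and (Metric.tendsto_nhds.1 hvk ε hε))).exists
    exact ⟨t k, dk k, vk k, ht0 k, htk, hdk, hvk, hvkN k⟩
  · intro h
    choose t dk vk ht0 ht hdk hvk hvkN using
      fun m : ℕ => h (1 / ((m : ℝ) + 1)) Nat.one_div_pos_of_nat
    have hlim := tendsto_one_div_add_atTop_nhds_zero_nat (𝕜 := ℝ)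
    refine ⟨t, dk, vk, ht0, squeeze_zero (fun m => (ht0 m).le) (fun m => (ht m).le) hlim,
      ?_, ?_, hvkN⟩
    · exact tendsto_iff_dist_tendsto_zero.2
        (squeeze_zero (fun _ => dist_nonneg) (fun m => (hdk m).le) hlim)
    · exact tendsto_iff_dist_tendsto_zero.2
        (squeeze_zero (fun _ => dist_nonneg) (fun m => (hvk m).le) hlim)

theorem isClosed_dirLimitingNormal : IsClosed (dirLimitingNormal S x d) := by
  refine isClosed_of_closure_subset fun v hv => mem_dirLimitingNormal_iff.2 fun ε hε => ?_
  obtain ⟨v₁, hv₁, hvv₁⟩ := Metric.mem_closure_iff.1 hv (ε / 2) (half_pos hε)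
  obtain ⟨t, d', v', ht0, ht, hd', hv', hv'N⟩ :=
    mem_dirLimitingNormal_iff.1 hv₁ (ε / 2) (half_pos hε)
  refine ⟨t, d', v', ht0, by linarith, by linarith, ?_, hv'N⟩
  calc dist v' v ≤ dist v' v₁ + dist v₁ v := dist_triangle _ _ _
    _ < ε / 2 + ε / 2 := add_lt_add hv' (by rwa [dist_comm])
    _ = ε := add_halves ε

theorem exists_mem_secondTangent_sub_mem_dirLimitingNormal [ProperSpace E] (hS : IsClosed S)
    {w : E} (hw : w ∈ secondTangent S x d) (a : E) :
    ∃ u ∈ secondTangent S x d, ‖w + a - u‖ ≤ ‖a‖ ∧ w + a - u ∈ dirLimitingNormal S x d := by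
  obtain ⟨t, wk, ht0, ht, hwk, hwkS⟩ := hw
  set c : ℕ → ℝ := fun k => 1 / 2 * t k ^ 2
  have hc : ∀ k, 0 < c k := fun k => by have := ht0 k; positivity
  set y : ℕ → E → E := fun k u => x + t k • d + c k • u
  have hdist : ∀ k u₁ u₂, dist (y k u₁) (y k u₂) = c k * dist u₁ u₂ := fun k u₁ u₂ => by
    rw [dist_add_left, dist_smul₀, Real.norm_of_nonneg (hc k).le]
  have hproj : ∀ k, ∃ u, y k u ∈ S ∧
      ∀ s ∈ S, dist (y k (wk k + a)) (y k u) ≤ dist (y k (wk k + a)) s := by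
    intro k
    obtain ⟨p, hpS, hp⟩ := hS.exists_infDist_eq_dist ⟨_, hwkS 0⟩ (y k (wk k + a))
    have hp' : y k ((c k)⁻¹ • (p - x - t k • d)) = p := by
      simp only [y, smul_inv_smul₀ (hc k).ne']
      abel
    refine ⟨_, hp' ▸ hpS, fun s hs => ?_⟩
    rw [hp', ← hp]
    exact Metric.infDist_le_dist_of_mem hs
  choose u hu hproj using hproj
  have hnear : ∀ k, ‖wk k + a - u k‖ ≤ ‖a‖ := fun k => by
    have := hproj k _ (hwkS k)
    rwa [hdist, hdist, mul_le_mul_iff_right₀ (hc k), dist_self_add_left, dist_eq_norm] at this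
  have hnormal : ∀ k, wk k + a - u k ∈ frechetNormal S (x + t k • (d + (t k / 2) • u k)) := by
    intro k
    have hyu : y k (wk k + a) - y k (u k) = c k • (wk k + a - u k) := by
      simp only [y, smul_sub]
      abel
    have hpt : x + t k • (d + (t k / 2) • u k) = y k (u k) := by
      simp only [y, c, smul_add, smul_smul, add_assoc]
      ring_nf
    have := smul_mem_frechetNormal (sub_mem_frechetNormal_of_forall_dist_le (hu k) (hproj k))
      (inv_nonneg.2 (hc k).le)
    rwa [hyu, inv_smul_smul₀ (hc k).ne', ← hpt] at this
  have hbdd := (Metric.isBounded_range_of_tendsto _ (hwk.add_const a)).cthickening (δ := ‖a‖)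
  obtain ⟨u₀, -, φ, hφ, hu₀⟩ := tendsto_subseq_of_bounded hbdd fun k =>
    Metric.mem_cthickening_of_dist_le (u k) _ _ _ ⟨k, rfl⟩
      (by rw [dist_comm, dist_eq_norm]; exact hnear k)
  have htφ := ht.comp hφ.tendsto_atTop
  have hwaφ := (hwk.comp hφ.tendsto_atTop).add_const a
  refine ⟨u₀, ⟨t ∘ φ, u ∘ φ, fun k => ht0 _, htφ, hu₀, fun k => hu (φ k)⟩,
    le_of_tendsto' (hwaφ.sub hu₀).norm fun k => hnear (φ k),
    t ∘ φ, fun k => d + (t (φ k) / 2) • u (φ k), fun k => wk (φ k) + a - u (φ k),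
    fun k => ht0 _, htφ, ?_, hwaφ.sub hu₀, fun k => hnormal (φ k)⟩
  simpa using tendsto_const_nhds.add ((htφ.div_const 2).smul hu₀)

theorem norm_le_of_norm_smul_sub_le {v e : E} {ρ ε : ℝ} (hρ : 0 ≤ ρ) (hε : 0 ≤ ε)
    (he : ‖ρ • v - e‖ ≤ ‖ρ • v‖) (hve : ⟪v, e⟫ ≤ ε * ‖e‖) : ‖e‖ ≤ 2 * ρ * ε := by
  have hsq : ‖e‖ ^ 2 ≤ 2 * ρ * ⟪v, e⟫ := by
    have := pow_le_pow_left₀ (norm_nonneg _) he 2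
    rw [norm_sub_sq_real, real_inner_smul_left] at this
    linarith
  have hsq' : ‖e‖ * ‖e‖ ≤ 2 * ρ * ε * ‖e‖ := by
    nlinarith [mul_le_mul_of_nonneg_left hve (by positivity : (0 : ℝ) ≤ 2 * ρ)]
  rcases (norm_nonneg e).eq_or_lt with he0 | he0
  · rw [← he0]; positivity
  · exact le_of_mul_le_mul_right hsq' he0

theorem frechetNormal_secondTangent_subset_dirLimitingNormal [ProperSpace E] (hS : IsClosed S)
    {w : E} : frechetNormal (secondTangent S x d) w ⊆ dirLimitingNormal S x d := by
  rintro v ⟨hw, hv⟩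
  rw [← isClosed_dirLimitingNormal.closure_eq, Metric.mem_closure_iff]
  intro ε hε
  obtain ⟨δ, hδ, hvδ⟩ := hv (ε / 4) (by positivity)
  set ρ := δ / (2 * ‖v‖ + 1)
  have hρ : 0 < ρ := by positivity
  obtain ⟨u, hu, hnear, hnormal⟩ :=
    exists_mem_secondTangent_sub_mem_dirLimitingNormal hS hw (ρ • v)
  rw [show w + ρ • v - u = ρ • v - (u - w) by abel] at hnear hnormal
  have huw : ‖u - w‖ < δ := calc
    ‖u - w‖ ≤ ‖ρ • v‖ + ‖ρ • v - (u - w)‖ := norm_le_norm_add_norm_sub _ _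
    _ ≤ 2 * ρ * ‖v‖ := by rw [norm_smul, Real.norm_of_nonneg hρ.le] at hnear ⊢; linarith
    _ < δ := by
      have : ρ * (2 * ‖v‖ + 1) = δ := div_mul_cancel₀ _ (by positivity)
      nlinarith
  have hsmall := norm_le_of_norm_smul_sub_le hρ.le (by positivity) hnear (hvδ u hu huw)
  refine ⟨ρ⁻¹ • (ρ • v - (u - w)), smul_mem_dirLimitingNormal hnormal (inv_nonneg.2 hρ.le), ?_⟩
  rw [smul_sub, inv_smul_smul₀ hρ.ne', dist_eq_norm, sub_sub_cancel, norm_smul,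
    Real.norm_of_nonneg (inv_nonneg.2 hρ.le), inv_mul_lt_iff₀ hρ]
  nlinarith

end

theorem stmt6_general {n : ℕ} (S : Set (EuclideanSpace ℝ (Fin n))) (hS : IsClosed S)
    (x : EuclideanSpace ℝ (Fin n)) (d : EuclideanSpace ℝ (Fin n)) :
    ∀ w ∈ secondTangent S x d,
      limitingNormal (secondTangent S x d) w ⊆ dirLimitingNormal S x d := by
  rintro w - v ⟨wk, vk, -, hvk, hvkN⟩
  exact isClosed_dirLimitingNormal.mem_of_tendsto hvk
    (.of_forall fun k => frechetNormal_secondTangent_subset_dirLimitingNormal hS (hvkN k))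

theorem stmt6 {n : ℕ} (S : Set (EuclideanSpace ℝ (Fin n))) (hS : IsClosed S)
    (x : EuclideanSpace ℝ (Fin n)) (hx : x ∈ S) (d : EuclideanSpace ℝ (Fin n))
    (hd : d ∈ tangentConeB S x) :
    ∀ w ∈ secondTangent S x d,
      limitingNormal (secondTangent S x d) w ⊆ dirLimitingNormal S x d :=
  stmt6_general S hS x d
end
end

section
/- Let g : ℝⁿ → ℝᵐ be twice continuously differentiable, K ⊆ ℝᵐ closed, C = g⁻¹(K), x̄ ∈ C, and d ∈ T_C(x̄). Assume the mapping M(x) = g(x) − K is metrically subregular at (x̄, 0) in direction d with modulus κ, i.e., there are ρ, δ, κ > 0 with d(x, g⁻¹(K)) ≤ κ·d(g(x), K) for all x ∈ x̄ + V_{ρ,δ}(d). Then for all w ∈ ℝⁿ: dist(w, T''_C(x̄; d)) ≤ κ · dist(∇g(x̄)w, T''_K(g(x̄); ∇g(x̄)d)), and consequently T''_C(x̄; d) = {w : ∇g(x̄)w ∈ T''_K(g(x̄); ∇g(x̄)d)}. -/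
open Filter Topology Set
open scoped RealInnerProductSpace

noncomputable section

variable {E : Type*} [NormedAddCommGroup E] [InnerProductSpace ℝ E]

/-! Given `u ∈ T''_K(g x̄; ∇g(x̄) d)`, realised by `(t_k, r_k, u_k)`, test the subregularity
estimate at `x_k = x̄ + t_k d + ½ t_k r_k w`; these points lie in `x̄ + V_{ρ,δ}(d)` because
`x_k - x̄ = t_k (d + ½ r_k w)` with `d + ½ r_k w → d`. Taylor's formula gives
`g(x_k) = g(x̄) + t_k ∇g(x̄) d + ½ t_k r_k ∇g(x̄) w + O(t_k²)`, and `t_k² / (t_k r_k) → 0`, so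
`dist(g(x_k), K) ≤ ½ t_k r_k (‖∇g(x̄) w - u_k‖ + o(1))`. Rescaling a nearest point of `C` to
`x_k` gives `w_k` with `x̄ + t_k d + ½ t_k r_k w_k ∈ C` and
`limsup ‖w_k - w‖ ≤ κ ‖∇g(x̄) w - u‖`, and any cluster point of `(w_k)` lies in `T''_C(x̄; d)`.
The inclusion `∇g(x̄) T''_C(x̄; d) ⊆ T''_K(g x̄; ∇g(x̄) d)` is the same Taylor estimate. -/

theorem ContDiffAt.isBigO_sub_sub_fderiv {E' F' : Type*} [NormedAddCommGroup E']
    [NormedSpace ℝ E'] [NormedAddCommGroup F'] [NormedSpace ℝ F'] {f : E' → F'} {x : E'}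
    (hf : ContDiffAt ℝ 2 f x) :
    (fun h => f (x + h) - f x - fderiv ℝ f x h) =O[𝓝 0] fun h => ‖h‖ ^ 2 := by
  obtain ⟨L, t, ht, hlip⟩ := (hf.fderiv_right (m := 1) le_rfl).exists_lipschitzOnWith
  obtain ⟨ε, hε, hball⟩ := Metric.mem_nhds_iff.1 (inter_mem ht (hf.eventually (by simp)))
  refine Asymptotics.IsBigO.of_bound L ?_
  filter_upwards [Metric.ball_mem_nhds 0 hε] with h hh
  rw [mem_ball_zero_iff] at hh
  have hsub : Metric.closedBall x ‖h‖ ⊆ t ∩ {y | ContDiffAt ℝ 2 f y} :=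
    (Metric.closedBall_subset_ball hh).trans hball
  have hx : x ∈ Metric.closedBall x ‖h‖ := Metric.mem_closedBall_self (norm_nonneg h)
  have hxh : x + h ∈ Metric.closedBall x ‖h‖ := by simp
  have hbound : ∀ y ∈ Metric.closedBall x ‖h‖, ‖fderiv ℝ f y - fderiv ℝ f x‖ ≤ L * ‖h‖ := by
    intro y hy
    rw [← dist_eq_norm]
    exact (hlip.dist_le_mul y (hsub hy).1 x (hsub hx).1).trans
      (mul_le_mul_of_nonneg_left hy L.coe_nonneg)
  have := (convex_closedBall x ‖h‖).norm_image_sub_le_of_norm_fderiv_le'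
    (fun y hy => (show ContDiffAt ℝ 2 f y from (hsub hy).2).differentiableAt (by norm_num))
    hbound hx hxh
  simpa [sq, mul_assoc] using this

theorem eventually_nhds_norm_smul_sub_le {d : E} {ρ : ℝ} (hρ : 0 < ρ) :
    ∀ᶠ v in 𝓝 d, ‖‖d‖ • v - ‖v‖ • d‖ ≤ ρ * ‖v‖ * ‖d‖ := by
  rcases eq_or_ne d 0 with rfl | hd
  · simp
  have hcont : Continuous fun v : E => ρ * ‖v‖ * ‖d‖ - ‖‖d‖ • v - ‖v‖ • d‖ := by fun_prop
  have hpos : 0 < ρ * ‖d‖ * ‖d‖ - ‖‖d‖ • d - ‖d‖ • d‖ := by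
    simpa using mul_pos (mul_pos hρ (norm_pos_iff.2 hd)) (norm_pos_iff.2 hd)
  filter_upwards [continuousAt_const.eventually_lt hcont.continuousAt hpos] with v hv
  linarith

theorem eventually_smul_mem_dirNbhd {d : E} {ρ δ : ℝ} (hρ : 0 < ρ) (hδ : 0 < δ)
    {t : ℕ → ℝ} {y : ℕ → E} (ht : ∀ k, 0 < t k) (ht0 : Tendsto t atTop (𝓝 0))
    (hy : Tendsto y atTop (𝓝 d)) : ∀ᶠ k in atTop, t k • y k ∈ dirNbhd d ρ δ := by
  have hsmall : ∀ᶠ k in atTop, ‖t k • y k‖ ≤ δ := by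
    have : Tendsto (fun k => t k • y k) atTop (𝓝 0) := by simpa using ht0.smul hy
    exact this.norm.eventually (ge_mem_nhds (by simpa using hδ))
  filter_upwards [hsmall, hy.eventually (eventually_nhds_norm_smul_sub_le hρ)] with k hk hdir
  refine ⟨hk, ?_⟩
  have hscale : ‖d‖ • (t k • y k) - ‖t k • y k‖ • d = t k • (‖d‖ • y k - ‖y k‖ • d) := by
    rw [norm_smul, Real.norm_of_nonneg (ht k).le]; module
  rw [hscale, norm_smul, norm_smul, Real.norm_of_nonneg (ht k).le]
  nlinarith [ht k]

theorem mem_asympTangent_of_mapClusterPt {S : Set E} {x d w : E} {t r : ℕ → ℝ} {wk : ℕ → E}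
    (ht : ∀ k, 0 < t k) (hr : ∀ k, 0 < r k) (ht0 : Tendsto t atTop (𝓝 0))
    (hr0 : Tendsto r atTop (𝓝 0)) (htr : Tendsto (fun k => t k / r k) atTop (𝓝 0))
    (hw : MapClusterPt w atTop wk)
    (hmem : ∀ k, x + t k • d + ((1/2 : ℝ) * t k * r k) • wk k ∈ S) :
    w ∈ asympTangent S x d := by
  obtain ⟨φ, hφ, hφw⟩ := hw.tendsto_subseq
  have hφ' := hφ.tendsto_atTop
  exact ⟨t ∘ φ, r ∘ φ, wk ∘ φ, fun k => ht _, fun k => hr _, ht0.comp hφ', hr0.comp hφ',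
    htr.comp hφ', hφw, fun k => hmem _⟩

theorem exists_mapClusterPt_dist_le {X : Type*} [PseudoMetricSpace X] [ProperSpace X]
    {u : ℕ → X} {w : X} {e : ℕ → ℝ} {c : ℝ} (hu : ∀ᶠ k in atTop, dist (u k) w ≤ e k)
    (he : Tendsto e atTop (𝓝 c)) : ∃ a, MapClusterPt a atTop u ∧ dist a w ≤ c := by
  have hball : ∀ ε > 0, ∀ᶠ k in atTop, u k ∈ Metric.closedBall w (c + ε) := fun ε hε => by
    filter_upwards [hu, he.eventually_lt_const (lt_add_of_pos_right c hε)] with k hk hek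
    exact hk.trans hek.le
  obtain ⟨a, -, ha⟩ := (isCompact_closedBall w (c + 1)).exists_mapClusterPt_of_frequently
    (hball 1 one_pos).frequently
  refine ⟨a, ha, le_of_forall_pos_le_add fun ε hε => ?_⟩
  exact Metric.isClosed_closedBall.mem_of_mapClusterPt ha (hball ε hε)

variable {F : Type*} [NormedAddCommGroup F] [InnerProductSpace ℝ F]

theorem tendsto_inv_smul_sub_sub_fderiv {g : E → F} {x d w : E} {t r : ℕ → ℝ} {wk : ℕ → E}
    (hg : ContDiffAt ℝ 2 g x) (ht : ∀ k, 0 < t k) (hr : ∀ k, 0 < r k)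
    (ht0 : Tendsto t atTop (𝓝 0)) (hr0 : Tendsto r atTop (𝓝 0))
    (htr : Tendsto (fun k => t k / r k) atTop (𝓝 0)) (hw : Tendsto wk atTop (𝓝 w)) :
    Tendsto (fun k => ((1/2 : ℝ) * t k * r k)⁻¹ •
      (g (x + t k • d + ((1/2 : ℝ) * t k * r k) • wk k) - g x -
        fderiv ℝ g x (t k • d + ((1/2 : ℝ) * t k * r k) • wk k))) atTop (𝓝 0) := by
  set y : ℕ → E := fun k => d + (r k / 2) • wk k
  have hy : Tendsto y atTop (𝓝 d) := by
    simpa using tendsto_const_nhds.add ((hr0.div_const 2).smul hw)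
  have hty : ∀ k, t k • d + ((1/2 : ℝ) * t k * r k) • wk k = t k • y k := fun k => by
    simp only [y]; module
  obtain ⟨L, hL⟩ := hg.isBigO_sub_sub_fderiv.bound
  have hty0 : Tendsto (fun k => t k • y k) atTop (𝓝 0) := by simpa using ht0.smul hy
  have hL' := hty0.eventually hL
  have hlim : Tendsto (fun k => 2 * L * (t k / r k) * ‖y k‖ ^ 2) atTop (𝓝 0) := by
    simpa using (htr.const_mul (2 * L)).mul (hy.norm.pow 2)
  refine squeeze_zero_norm' ?_ hlim
  filter_upwards [hL'] with k hk
  have htk := ht k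
  have hrk := hr k
  simp only [add_assoc, hty] at hk ⊢
  rw [norm_smul, norm_inv, Real.norm_of_nonneg (by positivity), ← div_eq_inv_mul,
    div_le_iff₀ (by positivity)]
  calc _ ≤ L * ‖‖t k • y k‖ ^ 2‖ := hk
    _ = _ := by
      rw [norm_pow, norm_norm, norm_smul, Real.norm_of_nonneg htk.le]
      field_simp

theorem fderiv_mem_asympTangent_of_mem_preimage {g : E → F} {K : Set F} {x d w : E}
    (hg : ContDiffAt ℝ 2 g x) (hw : w ∈ asympTangent (g ⁻¹' K) x d) :
    fderiv ℝ g x w ∈ asympTangent K (g x) (fderiv ℝ g x d) := by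
  obtain ⟨t, r, wk, ht, hr, ht0, hr0, htr, hwk, hmem⟩ := hw
  have hrem := tendsto_inv_smul_sub_sub_fderiv (d := d) hg ht hr ht0 hr0 htr hwk
  set s : ℕ → ℝ := fun k => (1/2 : ℝ) * t k * r k
  set Dg := fderiv ℝ g x
  set R : ℕ → F := fun k => g (x + t k • d + s k • wk k) - g x - Dg (t k • d + s k • wk k)
  refine ⟨t, r, fun k => Dg (wk k) + (s k)⁻¹ • R k, ht, hr, ht0, hr0, htr, ?_, fun k => ?_⟩
  · rw [← add_zero (Dg w)]
    exact ((Dg.continuous.tendsto w).comp hwk).add hrem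
  · have hs : s k ≠ 0 := by have := ht k; have := hr k; positivity
    have hpt : g x + t k • Dg d + s k • (Dg (wk k) + (s k)⁻¹ • R k) =
        g (x + t k • d + s k • wk k) := by
      simp only [R, map_add, map_smul, smul_add, smul_inv_smul₀ hs]
      abel
    exact hpt ▸ hmem k

theorem infDist_apply_add_add_smul_le {g : E → F} {K : Set F} {x d w : E} {u : F} {t s : ℝ}
    (hs : 0 < s) (hu : g x + t • fderiv ℝ g x d + s • u ∈ K) :
    Metric.infDist (g (x + t • d + s • w)) K ≤
      s * (‖s⁻¹ • (g (x + t • d + s • w) - g x - fderiv ℝ g x (t • d + s • w))‖ +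
        dist (fderiv ℝ g x w) u) := by
  set R := g (x + t • d + s • w) - g x - fderiv ℝ g x (t • d + s • w)
  have hpt : g (x + t • d + s • w) - (g x + t • fderiv ℝ g x d + s • u) =
      R + s • (fderiv ℝ g x w - u) := by
    simp only [R, map_add, map_smul, smul_sub]
    abel
  calc Metric.infDist (g (x + t • d + s • w)) K
      ≤ ‖g (x + t • d + s • w) - (g x + t • fderiv ℝ g x d + s • u)‖ :=
        (Metric.infDist_le_dist_of_mem hu).trans_eq (dist_eq_norm _ _)
    _ ≤ ‖R‖ + s * dist (fderiv ℝ g x w) u := by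
        rw [hpt, dist_eq_norm (fderiv ℝ g x w)]
        refine (norm_add_le _ _).trans_eq ?_
        rw [norm_smul, Real.norm_of_nonneg hs.le]
    _ = s * (‖s⁻¹ • R‖ + dist (fderiv ℝ g x w) u) := by
        rw [norm_smul, norm_inv, Real.norm_of_nonneg hs.le]
        field_simp

theorem exists_mem_asympTangent_preimage_dist_le [ProperSpace E] {g : E → F} {K : Set F}
    {x d w : E} {u : F} {ρ δ κ : ℝ} (hC : IsClosed (g ⁻¹' K)) (hg : ContDiffAt ℝ 2 g x)
    (hx : x ∈ g ⁻¹' K) (hρ : 0 < ρ) (hδ : 0 < δ) (hκ : 0 ≤ κ)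
    (hsub : ∀ y, y - x ∈ dirNbhd d ρ δ → Metric.infDist y (g ⁻¹' K) ≤ κ * Metric.infDist (g y) K)
    (hu : u ∈ asympTangent K (g x) (fderiv ℝ g x d)) :
    ∃ a ∈ asympTangent (g ⁻¹' K) x d, dist a w ≤ κ * dist (fderiv ℝ g x w) u := by
  obtain ⟨t, r, uk, ht, hr, ht0, hr0, htr, huk, hmemK⟩ := hu
  have hrem := tendsto_inv_smul_sub_sub_fderiv (d := d) hg ht hr ht0 hr0 htr
    (tendsto_const_nhds (x := w))
  set s : ℕ → ℝ := fun k => (1/2 : ℝ) * t k * r k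
  have hs : ∀ k, 0 < s k := fun k => by have := ht k; have := hr k; positivity
  set Dg := fderiv ℝ g x
  set R : ℕ → F := fun k => g (x + t k • d + s k • w) - g x - Dg (t k • d + s k • w)
  set xk : ℕ → E := fun k => x + t k • d + s k • w
  choose x' hx'C hx'dist using fun k => hC.exists_infDist_eq_dist ⟨x, hx⟩ (xk k)
  set wk : ℕ → E := fun k => w + (s k)⁻¹ • (x' k - xk k)
  have hmem : ∀ k, x + t k • d + s k • wk k ∈ g ⁻¹' K := fun k => by
    convert hx'C k using 1
    simp only [wk, xk, smul_add, smul_inv_smul₀ (hs k).ne']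
    abel
  have hdir : ∀ᶠ k in atTop, xk k - x ∈ dirNbhd d ρ δ := by
    have hy : Tendsto (fun k => d + (r k / 2) • w) atTop (𝓝 d) := by
      simpa using tendsto_const_nhds.add ((hr0.div_const 2).smul_const w)
    filter_upwards [eventually_smul_mem_dirNbhd hρ hδ ht ht0 hy] with k hk
    convert hk using 1
    simp only [xk, s]
    module
  have hbound : ∀ᶠ k in atTop,
      dist (wk k) w ≤ κ * (‖(s k)⁻¹ • R k‖ + dist (Dg w) (uk k)) := by
    filter_upwards [hdir] with k hk
    have hsk := hs k
    have hK := infDist_apply_add_add_smul_le (w := w) hsk (hmemK k)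
    calc dist (wk k) w = (s k)⁻¹ * Metric.infDist (xk k) (g ⁻¹' K) := by
          rw [hx'dist, dist_eq_norm, dist_comm, dist_eq_norm]
          simp only [wk, add_sub_cancel_left, norm_smul, norm_inv, Real.norm_of_nonneg hsk.le]
      _ ≤ (s k)⁻¹ * (κ * (s k * (‖(s k)⁻¹ • R k‖ + dist (Dg w) (uk k)))) := by
          gcongr
          exact (hsub _ hk).trans (mul_le_mul_of_nonneg_left hK hκ)
      _ = κ * (‖(s k)⁻¹ • R k‖ + dist (Dg w) (uk k)) := by field_simp
  have he : Tendsto (fun k => κ * (‖(s k)⁻¹ • R k‖ + dist (Dg w) (uk k))) atTop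
      (𝓝 (κ * (0 + dist (Dg w) u))) := by
    simpa only [norm_zero] using (hrem.norm.add (tendsto_const_nhds.dist huk)).const_mul κ
  obtain ⟨a, ha, hdist⟩ := exists_mapClusterPt_dist_le hbound he
  exact ⟨a, mem_asympTangent_of_mapClusterPt ht hr ht0 hr0 htr ha hmem, by simpa using hdist⟩

theorem infEDist_le_ofReal_mul_infEDist {X Y : Type*} [PseudoMetricSpace X] [PseudoMetricSpace Y]
    {A : Set X} {B : Set Y} {x : X} {y : Y} {κ : ℝ} (hκ : 0 < κ)
    (h : ∀ u ∈ B, ∃ a ∈ A, dist a x ≤ κ * dist y u) :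
    Metric.infEDist x A ≤ ENNReal.ofReal κ * Metric.infEDist y B := by
  have hκ0 : ENNReal.ofReal κ ≠ 0 := (ENNReal.ofReal_pos.2 hκ).ne'
  rw [mul_comm, ← ENNReal.div_le_iff hκ0 ENNReal.ofReal_ne_top, Metric.le_infEDist]
  intro u hu
  obtain ⟨a, ha, hdist⟩ := h u hu
  rw [ENNReal.div_le_iff hκ0 ENNReal.ofReal_ne_top]
  calc Metric.infEDist x A ≤ edist x a := Metric.infEDist_le_edist_of_mem ha
    _ ≤ ENNReal.ofReal (κ * dist y u) := by
        rw [edist_dist, dist_comm]; exact ENNReal.ofReal_le_ofReal hdist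
    _ = edist y u * ENNReal.ofReal κ := by rw [ENNReal.ofReal_mul hκ.le, edist_dist, mul_comm]

theorem stmt10_general {n m : ℕ} (g : EuclideanSpace ℝ (Fin n) → EuclideanSpace ℝ (Fin m))
    (hg : ContDiff ℝ 2 g) (K : Set (EuclideanSpace ℝ (Fin m))) (hK : IsClosed K)
    (xb : EuclideanSpace ℝ (Fin n)) (hxb : xb ∈ g ⁻¹' K)
    (d : EuclideanSpace ℝ (Fin n))
    (ρ δ κ : ℝ) (hρ : 0 < ρ) (hδ : 0 < δ) (hκ : 0 < κ)
    (hsub : ∀ x : EuclideanSpace ℝ (Fin n), x - xb ∈ dirNbhd d ρ δ →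
      Metric.infDist x (g ⁻¹' K) ≤ κ * Metric.infDist (g x) K) :
    (∀ w : EuclideanSpace ℝ (Fin n),
      EMetric.infEdist w (asympTangent (g ⁻¹' K) xb d) ≤
        ENNReal.ofReal κ *
          EMetric.infEdist (fderiv ℝ g xb w) (asympTangent K (g xb) (fderiv ℝ g xb d))) ∧
    asympTangent (g ⁻¹' K) xb d =
      {w | fderiv ℝ g xb w ∈ asympTangent K (g xb) (fderiv ℝ g xb d)} := by
  have hgx : ContDiffAt ℝ 2 g xb := hg.contDiffAt
  have key : ∀ w, ∀ u ∈ asympTangent K (g xb) (fderiv ℝ g xb d),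
      ∃ a ∈ asympTangent (g ⁻¹' K) xb d, dist a w ≤ κ * dist (fderiv ℝ g xb w) u :=
    fun _ _ hu => exists_mem_asympTangent_preimage_dist_le (hK.preimage hg.continuous) hgx hxb
      hρ hδ hκ.le hsub hu
  refine ⟨fun w => infEDist_le_ofReal_mul_infEDist hκ (key w), ?_⟩
  ext w
  refine ⟨fderiv_mem_asympTangent_of_mem_preimage hgx, fun hw => ?_⟩
  obtain ⟨a, ha, hdist⟩ := key w _ hw
  rw [dist_self, mul_zero, dist_le_zero] at hdist
  exact hdist ▸ ha

theorem stmt10 {n m : ℕ} (g : EuclideanSpace ℝ (Fin n) → EuclideanSpace ℝ (Fin m))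
    (hg : ContDiff ℝ 2 g) (K : Set (EuclideanSpace ℝ (Fin m))) (hK : IsClosed K)
    (xb : EuclideanSpace ℝ (Fin n)) (hxb : xb ∈ g ⁻¹' K)
    (d : EuclideanSpace ℝ (Fin n)) (hd : d ∈ tangentConeB (g ⁻¹' K) xb)
    (ρ δ κ : ℝ) (hρ : 0 < ρ) (hδ : 0 < δ) (hκ : 0 < κ)
    (hsub : ∀ x : EuclideanSpace ℝ (Fin n), x - xb ∈ dirNbhd d ρ δ →
      Metric.infDist x (g ⁻¹' K) ≤ κ * Metric.infDist (g x) K) :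
    (∀ w : EuclideanSpace ℝ (Fin n),
      EMetric.infEdist w (asympTangent (g ⁻¹' K) xb d) ≤
        ENNReal.ofReal κ *
          EMetric.infEdist (fderiv ℝ g xb w) (asympTangent K (g xb) (fderiv ℝ g xb d))) ∧
    asympTangent (g ⁻¹' K) xb d =
      {w | fderiv ℝ g xb w ∈ asympTangent K (g xb) (fderiv ℝ g xb d)} :=
  stmt10_general g hg K hK xb hxb d ρ δ κ hρ hδ hκ hsub
end
end

section
/- Let C ⊆ ℝⁿ be closed, x̄ ∈ C, and d ∉ T_C(x̄). Then there exist ρ, δ > 0 such that C ∩ (x̄ + V_{ρ,δ}(d)) = {x̄}; consequently x̄ is automatically a local optimal solution in direction d for any continuous objective. -/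
open Filter Topology Set
open scoped RealInnerProductSpace

noncomputable section

variable {E : Type*} [NormedAddCommGroup E] [InnerProductSpace ℝ E]

/-! A sequence of points of `C` that approach `x̄` from inside ever thinner neighborhoods
`V_{1/(k+1),1/(k+1)}(d)` shows, after rescaling to norm `‖d‖`, that `d` is tangent to `C` at `x̄`.
Hence outside the tangent cone some `V_{ρ,δ}(d)` meets `C - x̄` only at `0`, so `x̄` is the only
competitor and optimality is automatic. -/

lemma zero_mem_dirNbhd (d : E) (ρ : ℝ) {δ : ℝ} (hδ : 0 ≤ δ) : (0 : E) ∈ dirNbhd d ρ δ := by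
  simp [dirNbhd, hδ]

lemma zero_mem_tangentConeB {S : Set E} {x : E} (hx : x ∈ S) : (0 : E) ∈ tangentConeB S x :=
  ⟨fun k => 1 / (k + 1), fun _ => 0, fun k => by positivity,
    tendsto_one_div_add_atTop_nhds_zero_nat, tendsto_const_nhds, fun k => by simpa using hx⟩

lemma norm_smul_sub_le_of_mem_dirNbhd {d w : E} {ρ δ : ℝ} (hw : w ≠ 0)
    (h : w ∈ dirNbhd d ρ δ) : ‖(‖d‖ / ‖w‖) • w - d‖ ≤ ρ * ‖d‖ := by
  have hw' : 0 < ‖w‖ := norm_pos_iff.mpr hw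
  have heq : (‖d‖ / ‖w‖) • w - d = ‖w‖⁻¹ • (‖d‖ • w - ‖w‖ • d) := by
    rw [smul_sub, smul_smul, smul_smul, inv_mul_cancel₀ hw'.ne', one_smul, inv_mul_eq_div]
  calc ‖(‖d‖ / ‖w‖) • w - d‖ = ‖w‖⁻¹ * ‖‖d‖ • w - ‖w‖ • d‖ := by
        rw [heq, norm_smul, norm_inv, norm_norm]
    _ ≤ ‖w‖⁻¹ * (ρ * ‖w‖ * ‖d‖) := by gcongr; exact h.2
    _ = ρ * ‖d‖ := by field_simp

theorem mem_tangentConeB_of_forall_dirNbhd {S : Set E} {x d : E} (hd : d ≠ 0)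
    (h : ∀ ρ > (0 : ℝ), ∀ δ > (0 : ℝ), ∃ y ∈ S, y ≠ x ∧ y - x ∈ dirNbhd d ρ δ) :
    d ∈ tangentConeB S x := by
  have hd' : 0 < ‖d‖ := norm_pos_iff.mpr hd
  choose y hyS hyx hyV using fun k : ℕ =>
    h (1 / (k + 1)) (by positivity) (1 / (k + 1)) (by positivity)
  set w := fun k => y k - x
  have hw : ∀ k, w k ≠ 0 := fun k => sub_ne_zero.mpr (hyx k)
  have hw' : ∀ k, 0 < ‖w k‖ := fun k => norm_pos_iff.mpr (hw k)
  refine ⟨fun k => ‖w k‖ / ‖d‖, fun k => (‖d‖ / ‖w k‖) • w k,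
    fun k => div_pos (hw' k) hd', ?_, ?_, fun k => ?_⟩
  · refine squeeze_zero (fun k => (div_pos (hw' k) hd').le) (fun k => ?_)
      (zero_div ‖d‖ ▸ tendsto_one_div_add_atTop_nhds_zero_nat.div_const ‖d‖)
    exact div_le_div_of_nonneg_right (hyV k).1 hd'.le
  · rw [tendsto_iff_norm_sub_tendsto_zero]
    exact squeeze_zero (fun k => norm_nonneg _)
      (fun k => norm_smul_sub_le_of_mem_dirNbhd (hw k) (hyV k))
      (zero_mul ‖d‖ ▸ tendsto_one_div_add_atTop_nhds_zero_nat.mul_const ‖d‖)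
  · have : (‖w k‖ / ‖d‖) • (‖d‖ / ‖w k‖) • w k = w k := by
      rw [smul_smul, div_mul_div_cancel₀ hd'.ne', div_self (hw' k).ne', one_smul]
    simpa [this, w] using hyS k

theorem exists_dirNbhd_inter_eq_singleton_of_notMem_tangentConeB {S : Set E} {x d : E}
    (hx : x ∈ S) (hd : d ∉ tangentConeB S x) :
    ∃ ρ > (0 : ℝ), ∃ δ > (0 : ℝ), {y ∈ S | y - x ∈ dirNbhd d ρ δ} = {x} := by
  have hd0 : d ≠ 0 := by rintro rfl; exact hd (zero_mem_tangentConeB hx)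
  by_contra! hne
  refine hd (mem_tangentConeB_of_forall_dirNbhd hd0 fun ρ hρ δ hδ => ?_)
  by_contra! hsub
  refine hne ρ hρ δ hδ (Set.eq_singleton_iff_unique_mem.mpr ⟨?_, fun y hy => ?_⟩)
  · exact ⟨hx, by simpa using zero_mem_dirNbhd d ρ hδ.le⟩
  · by_contra hyx
    exact hsub y hy.1 hyx hy.2

theorem stmt13_general {n : ℕ} (C : Set (EuclideanSpace ℝ (Fin n)))
    (xb : EuclideanSpace ℝ (Fin n)) (hxb : xb ∈ C)
    (d : EuclideanSpace ℝ (Fin n)) (hd : d ∉ tangentConeB C xb) :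
    (∃ ρ > (0:ℝ), ∃ δ > (0:ℝ), {x ∈ C | x - xb ∈ dirNbhd d ρ δ} = {xb}) ∧
    ∀ f : EuclideanSpace ℝ (Fin n) → ℝ, Continuous f →
      ∃ ρ > (0:ℝ), ∃ δ > (0:ℝ), ∀ x ∈ C, x - xb ∈ dirNbhd d ρ δ → f xb ≤ f x := by
  obtain ⟨ρ, hρ, δ, hδ, hsingleton⟩ :=
    exists_dirNbhd_inter_eq_singleton_of_notMem_tangentConeB hxb hd
  refine ⟨⟨ρ, hρ, δ, hδ, hsingleton⟩, fun f _ => ⟨ρ, hρ, δ, hδ, fun x hx hxV => ?_⟩⟩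
  have hmem : x ∈ {y ∈ C | y - xb ∈ dirNbhd d ρ δ} := ⟨hx, hxV⟩
  rw [hsingleton, Set.mem_singleton_iff] at hmem
  rw [hmem]

theorem stmt13 {n : ℕ} (C : Set (EuclideanSpace ℝ (Fin n))) (hC : IsClosed C)
    (xb : EuclideanSpace ℝ (Fin n)) (hxb : xb ∈ C)
    (d : EuclideanSpace ℝ (Fin n)) (hd : d ∉ tangentConeB C xb) :
    (∃ ρ > (0:ℝ), ∃ δ > (0:ℝ), {x ∈ C | x - xb ∈ dirNbhd d ρ δ} = {xb}) ∧
    ∀ f : EuclideanSpace ℝ (Fin n) → ℝ, Continuous f →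
      ∃ ρ > (0:ℝ), ∃ δ > (0:ℝ), ∀ x ∈ C, x - xb ∈ dirNbhd d ρ δ → f xb ≤ f x :=
  stmt13_general C xb hxb d hd
end
end
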